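/- In the instance of Example CTTCRn2PS, the assignment μ = {(a1,a2,r1),(a3,a4,r2),...,(a_{2n−1},a_{2n},r_n)} has no 4PS blocking pair but every pair of agents that are not roommates is a 2PS blocking pair, giving exactly 2n² − 2n 2PS blocking pairs. -/
import Mathlib


/-- A roommate assignment: each agent has a roommate (`mate`) and a room (`room`);
roommates share a room and each room hosts exactly one pair. -/
structure Assignment (A R : Type*) where
  mate : A → A
  room : A → R
  mate_ne_self : ∀ i, mate i ≠ i
  mate_invol : ∀ i, mate (mate i) = i
  room_mate : ∀ i, room (mate i) = room i
  room_eq_iff : ∀ i j, room i = room j ↔ (j = i ∨ j = mate i)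

variable {A R : Type*}

/-- Utility of agent `i` in assignment `μ`: happiness for the roommate plus value of the room. -/
def util (h : A → A → ℝ) (v : A → R → ℝ) (μ : Assignment A R) (i : A) : ℝ :=
  h i (μ.mate i) + v i (μ.room i)

/-- `(i,j)` is a 2-person-stable blocking pair: they live in different rooms and both would
strictly gain by swapping places. -/
def blocking2PS (h : A → A → ℝ) (v : A → R → ℝ) (μ : Assignment A R) (i j : A) : Prop :=
  μ.room i ≠ μ.room j ∧
  h i (μ.mate j) + v i (μ.room j) > h i (μ.mate i) + v i (μ.room i) ∧
  h j (μ.mate i) + v j (μ.room i) > h j (μ.mate j) + v j (μ.room j)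

/-- `(i,j)` is a 4-person-stable blocking pair: in addition, both displaced roommates
strictly prefer their new roommate. -/
def blocking4PS (h : A → A → ℝ) (v : A → R → ℝ) (μ : Assignment A R) (i j : A) : Prop :=
  blocking2PS h v μ i j ∧
  h (μ.mate i) j > h (μ.mate i) i ∧
  h (μ.mate j) i > h (μ.mate j) j

def is2PS (h : A → A → ℝ) (v : A → R → ℝ) (μ : Assignment A R) : Prop :=
  ∀ i j, ¬ blocking2PS h v μ i j

def is4PS (h : A → A → ℝ) (v : A → R → ℝ) (μ : Assignment A R) : Prop :=
  ∀ i j, ¬ blocking4PS h v μ i j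

/-- `μ'` Pareto dominates `μ`. -/
def ParetoDom (h : A → A → ℝ) (v : A → R → ℝ) (μ' μ : Assignment A R) : Prop :=
  (∀ i, util h v μ i ≤ util h v μ' i) ∧ ∃ i, util h v μ i < util h v μ' i

def ParetoOpt (h : A → A → ℝ) (v : A → R → ℝ) (μ : Assignment A R) : Prop :=
  ∀ μ', ¬ ParetoDom h v μ' μ

/-- `μ'` is the result of swapping agents `i` and `j` in `μ`. -/
def IsSwap (μ μ' : Assignment A R) (i j : A) : Prop :=
  μ'.mate i = μ.mate j ∧ μ'.room i = μ.room j ∧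
  μ'.mate j = μ.mate i ∧ μ'.room j = μ.room i ∧
  μ'.room (μ.mate i) = μ.room i ∧ μ'.room (μ.mate j) = μ.room j ∧
  ∀ k, k ≠ i → k ≠ j → k ≠ μ.mate i → k ≠ μ.mate j →
    μ'.mate k = μ.mate k ∧ μ'.room k = μ.room k

/-- Social welfare: the sum of all agents' utilities. -/
noncomputable def SW [Fintype A] (h : A → A → ℝ) (v : A → R → ℝ) (μ : Assignment A R) : ℝ :=
  ∑ i, util h v μ i

/-- The designated partner of agent `i`: agents are paired as (a1,a2),(a3,a4),…
(0-indexed: (0,1),(2,3),…). -/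
def partner (n : ℕ) (i : Fin (2 * n)) : Fin (2 * n) :=
  if h2 : i.val % 2 = 0 then ⟨i.val + 1, by have := i.isLt; omega⟩
  else ⟨i.val - 1, by have := i.isLt; omega⟩

/-- Each agent values its designated partner at 1 and every other agent at 0. -/
def hEx15 (n : ℕ) : Fin (2 * n) → Fin (2 * n) → ℝ :=
  fun i j => if j = partner n i then 1 else 0

/-- Each agent values its own room (room ⌊i/2⌋) at 0 and every other room at 2. -/
def vEx15 (n : ℕ) : Fin (2 * n) → Fin n → ℝ :=
  fun i r => if r.val = i.val / 2 then 0 else 2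

lemma partner_div2 (n : ℕ) (i : Fin (2 * n)) : (partner n i).val / 2 = i.val / 2 := by
  unfold partner; split <;> simp <;> omega

lemma partner_partner (n : ℕ) (i : Fin (2 * n)) : partner n (partner n i) = i := by
  unfold partner
  rcases Nat.even_or_odd i.val with h | h
  · have h2 : i.val % 2 = 0 := Nat.even_iff.mp h
    have h3 : ((⟨i.val + 1, by have := i.isLt; omega⟩ : Fin (2 * n)) : ℕ) % 2 ≠ 0 := by
      simp; omega
    simp only [dif_pos h2, dif_neg h3]
    exact Fin.ext (by show i.val + 1 - 1 = i.val; omega)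
  · have h2 : i.val % 2 ≠ 0 := by have := Nat.odd_iff.mp h; omega
    have h3 : ((⟨i.val - 1, by have := i.isLt; omega⟩ : Fin (2 * n)) : ℕ) % 2 = 0 := by
      simp; omega
    simp only [dif_neg h2, dif_pos h3]
    exact Fin.ext (by show i.val - 1 + 1 = i.val; omega)

lemma hEx15_le_one (n : ℕ) (i j : Fin (2 * n)) : hEx15 n i j ≤ 1 := by
  unfold hEx15; split <;> norm_num

lemma hEx15_nonneg (n : ℕ) (i j : Fin (2 * n)) : 0 ≤ hEx15 n i j := by
  unfold hEx15; split <;> norm_num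

/-- In the Example-CTTCRn2PS instance, the assignment pairing each agent with
its designated partner in its own room has no 4PS blocking pair, yet every pair of
non-roommates is a 2PS blocking pair, giving exactly 2n² − 2n (unordered) 2PS blocking
pairs. -/
theorem cttcr_not_2PS (n : ℕ) (μ : Assignment (Fin (2 * n)) (Fin n))
    (hmate : ∀ i, μ.mate i = partner n i)
    (hroom : ∀ i, (μ.room i).val = i.val / 2) :
    is4PS (hEx15 n) (vEx15 n) μ ∧
    (∀ i j, μ.room i ≠ μ.room j → blocking2PS (hEx15 n) (vEx15 n) μ i j) ∧
    {p : Fin (2 * n) × Fin (2 * n) |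
        p.1 < p.2 ∧ blocking2PS (hEx15 n) (vEx15 n) μ p.1 p.2}.ncard
      = 2 * n ^ 2 - 2 * n := by
  have hroomeq : ∀ i j : Fin (2 * n), μ.room i = μ.room j ↔ i.val / 2 = j.val / 2 := by
    intro i j
    rw [← Fin.val_inj, hroom, hroom]
  have h4 : is4PS (hEx15 n) (vEx15 n) μ := by
    rintro i j ⟨-, h1, -⟩
    rw [hmate] at h1
    have : hEx15 n (partner n i) i = 1 := by
      unfold hEx15
      rw [if_pos (partner_partner n i).symm]
    rw [this] at h1
    exact absurd h1 (not_lt.mpr (hEx15_le_one n _ _))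
  have h2 : ∀ i j, μ.room i ≠ μ.room j → blocking2PS (hEx15 n) (vEx15 n) μ i j := by
    intro i j hne
    have key : ∀ a b : Fin (2 * n), μ.room a ≠ μ.room b →
        hEx15 n a (μ.mate b) + vEx15 n a (μ.room b) >
        hEx15 n a (μ.mate a) + vEx15 n a (μ.room a) := by
      intro a b hab
      have hva : vEx15 n a (μ.room a) = 0 := by
        unfold vEx15; rw [if_pos (hroom a)]
      have hvb : vEx15 n a (μ.room b) = 2 := by
        unfold vEx15
        rw [if_neg]
        rw [hroom]
        intro hc
        exact hab ((hroomeq a b).mpr hc.symm)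
      have hma : hEx15 n a (μ.mate a) = 1 := by
        unfold hEx15; rw [hmate, if_pos rfl]
      rw [hva, hvb, hma]
      have := hEx15_nonneg n a (μ.mate b)
      linarith
    exact ⟨hne, key i j hne, key j i (Ne.symm hne)⟩
  refine ⟨h4, h2, ?_⟩
  have hbiff : ∀ i j, blocking2PS (hEx15 n) (vEx15 n) μ i j ↔ μ.room i ≠ μ.room j := by
    intro i j
    exact ⟨fun hb => hb.1, h2 i j⟩
  classical
  -- rewrite the set as a Finset
  have hset : {p : Fin (2 * n) × Fin (2 * n) |
        p.1 < p.2 ∧ blocking2PS (hEx15 n) (vEx15 n) μ p.1 p.2}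
      = ↑(Finset.univ.filter (fun p : Fin (2 * n) × Fin (2 * n) =>
          p.1 < p.2 ∧ p.1.val / 2 ≠ p.2.val / 2)) := by
    ext p
    simp only [Set.mem_setOf_eq, Finset.coe_filter, Finset.mem_univ, true_and]
    rw [hbiff]
    constructor
    · rintro ⟨h1, h2'⟩; exact ⟨h1, fun hc => h2' ((hroomeq _ _).mpr hc)⟩
    · rintro ⟨h1, h2'⟩; exact ⟨h1, fun hc => h2' ((hroomeq _ _).mp hc)⟩
  rw [hset, Set.ncard_coe_finset]
  set T := Finset.univ.filter (fun p : Fin (2 * n) × Fin (2 * n) => p.1 < p.2) with hT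
  have hsplit : (Finset.univ.filter (fun p : Fin (2 * n) × Fin (2 * n) =>
          p.1 < p.2 ∧ p.1.val / 2 ≠ p.2.val / 2)).card
      + (Finset.univ.filter (fun p : Fin (2 * n) × Fin (2 * n) =>
          p.1 < p.2 ∧ p.1.val / 2 = p.2.val / 2)).card = T.card := by
    rw [hT]
    rw [show (Finset.univ.filter (fun p : Fin (2 * n) × Fin (2 * n) =>
          p.1 < p.2 ∧ p.1.val / 2 ≠ p.2.val / 2)) =
        (Finset.univ.filter (fun p : Fin (2 * n) × Fin (2 * n) => p.1 < p.2)).filter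
          (fun p => ¬ p.1.val / 2 = p.2.val / 2) by rw [Finset.filter_filter]]
    rw [show (Finset.univ.filter (fun p : Fin (2 * n) × Fin (2 * n) =>
          p.1 < p.2 ∧ p.1.val / 2 = p.2.val / 2)) =
        (Finset.univ.filter (fun p : Fin (2 * n) × Fin (2 * n) => p.1 < p.2)).filter
          (fun p => p.1.val / 2 = p.2.val / 2) by rw [Finset.filter_filter]]
    rw [Nat.add_comm]
    exact Finset.card_filter_add_card_filter_not _
  -- card of T
  have hTcard : T.card = n * (2 * n - 1) := by
    rw [hT, Finset.card_filter, ← Finset.univ_product_univ, Finset.sum_product]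
    have : ∀ i : Fin (2 * n), (∑ j : Fin (2 * n), if i < j then 1 else 0)
        = 2 * n - 1 - i.val := by
      intro i
      rw [← Finset.card_filter]
      rw [show (Finset.univ.filter (fun j => i < j)) = Finset.Ioi i from by ext; simp]
      exact Fin.card_Ioi i
    rw [Finset.sum_congr rfl (fun i _ => this i)]
    rw [Fin.sum_univ_eq_sum_range (fun k => 2 * n - 1 - k)]
    rw [show ∑ j ∈ Finset.range (2 * n), (2 * n - 1 - j) = ∑ j ∈ Finset.range (2 * n), j from
      Finset.sum_range_reflect (fun k => k) (2 * n)]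
    refine Nat.eq_of_mul_eq_mul_right (show 0 < 2 by norm_num) ?_
    rw [Finset.sum_range_id_mul_two (2 * n)]
    ring
  -- card of same-room pairs
  have hMcard : (Finset.univ.filter (fun p : Fin (2 * n) × Fin (2 * n) =>
          p.1 < p.2 ∧ p.1.val / 2 = p.2.val / 2)).card = n := by
    have himg : (Finset.univ.filter (fun p : Fin (2 * n) × Fin (2 * n) =>
          p.1 < p.2 ∧ p.1.val / 2 = p.2.val / 2))
        = Finset.univ.image (fun k : Fin n =>
            ((⟨2 * k.val, by omega⟩ : Fin (2 * n)), (⟨2 * k.val + 1, by omega⟩ : Fin (2 * n)))) := by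
      ext p
      simp only [Finset.mem_filter, Finset.mem_univ, true_and, Finset.mem_image]
      constructor
      · rintro ⟨hlt, hdiv⟩
        have hlt' : p.1.val < p.2.val := hlt
        refine ⟨⟨p.1.val / 2, by omega⟩, ?_⟩
        have h1 : p.1.val = 2 * (p.1.val / 2) := by omega
        have h2' : p.2.val = 2 * (p.1.val / 2) + 1 := by omega
        ext <;> simp <;> omega
      · rintro ⟨k, rfl⟩
        constructor
        · show (2 * k.val : ℕ) < 2 * k.val + 1; omega
        · simp; omega
    rw [himg, Finset.card_image_of_injective _ ?_, Finset.card_univ, Fintype.card_fin]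
    intro a b hab
    have := congrArg (fun p => (Prod.fst p).val) hab
    simp at this
    exact Fin.ext this
  have key : n * (2 * n - 1) - n = 2 * n ^ 2 - 2 * n := by
    cases n with
    | zero => rfl
    | succ m =>
      have h1 : 2 * (m + 1) - 1 = 2 * m + 1 := by omega
      rw [h1]
      have e1 : (m + 1) * (2 * m + 1) = 2 * (m * m) + 3 * m + 1 := by ring
      have e2 : 2 * (m + 1) ^ 2 = 2 * (m * m) + 4 * m + 2 := by ring
      rw [e1, e2]
      generalize m * m = q
      omega
  have hF : (Finset.univ.filter (fun p : Fin (2 * n) × Fin (2 * n) =>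
      p.1 < p.2 ∧ p.1.val / 2 ≠ p.2.val / 2)).card = T.card - n := by omega
  rw [hF, hTcard, key]
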